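/- Let X and Y be Banach spaces such that the closed unit ball of X* is sequentially weak* compact, let s > 0, and let T : X* → Y* satisfy: (A1) T is sequentially weak*-to-weak* continuous; (A2) T(a u) = a^s T(u) for all a > 0 and u ∈ X*; (A3) there exist sequences of linear isometric isomorphisms σ_k^{X*} : X* → X* and σ_k^{Y*} : Y* → Y* with T ∘ σ_k^{X*} = σ_k^{Y*} ∘ T for all k and σ_k^{Y*} f converging weak* to 0 for every f ∈ Y*. For ω ∈ ℕ ∪ {∞} define Λ_ω := { Σ_{j=1}^{ω} c_j T u_j : u_j ∈ 𝔹_{X*}, c_j ∈ ℝ, Σ_{j=1}^{ω} |c_j| < ∞, the series converging in the norm of Y* }. If Λ_∞ is non-meagre in Y*, then there exists ω ∈ ℕ ∪ {∞} such that: Λ_ω = Y*; the union of Λ_m over natural numbers m < ω is meagre in Y*; and T is 1/ω-open, i.e. there is a constant C > 0 such that every f ∈ Y* can be written as f = Σ_{j=1}^{ω} c_j T u_j with u_j ∈ 𝔹_{X*} and Σ_{j=1}^{ω} |c_j| ≤ C ‖f‖_{Y*}. -/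

import Mathlib

/-!
`Λ_ω` is the countable union of the sets `atomicBall T ω n` of elements with a decomposition of
cost `∑ |c_j| ≤ n`, so Baire's theorem can be applied to these. Let `ω` be the least index with
`Λ_ω` non-meagre (`ω = ∞` if there is none).

For finite `ω` the sets `atomicBall T ω n` are weak*-sequentially closed: the finitely many
coefficients and atoms converge along a common subsequence, and `T` is sequentially
weak*-continuous. Hence one of them contains a norm ball around some `f₀`. Since `σ_k` commutes
with `T` and `σ_k f₀ ⇀ 0`, the weak* limits of `f + σ_k f₀` show that it contains a ball around
`0` as well.

For `ω = ∞`, `T` is bounded on the unit ball by Banach–Steinhaus, so a countable absolutely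
convergent sum of decompositions can be rearranged into a single one. This makes the sets
`atomicBall T ⊤ n` convex and symmetric, so the closure of a non-meagre one contains a ball around
`0`, and successive approximation, as in the open mapping theorem, removes the closure.

In both cases homogeneity, `a • atomicBall T ω R ⊆ atomicBall T ω (|a| * R)`, turns the ball into
the constant `C`.
-/

open MeasureTheory Filter Topology

/-- A sequence in a dual space converges weak-star. -/
def WeakStarTendsto {X : Type*} [NormedAddCommGroup X] [NormedSpace ℝ X]
    (u : ℕ → StrongDual ℝ X) (u₀ : StrongDual ℝ X) : Prop :=
  ∀ x : X, Tendsto (fun k => u k x) atTop (𝓝 (u₀ x))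

/-- The set `Λ_ω` of sums `Σ_{j<ω} c_j T u_j` with `u_j` in the unit ball and
`Σ |c_j| < ∞`, the series converging in norm. -/
def Lambda {X Y : Type*} [NormedAddCommGroup X] [NormedSpace ℝ X]
    [NormedAddCommGroup Y] [NormedSpace ℝ Y]
    (T : StrongDual ℝ X → StrongDual ℝ Y) (ω : ℕ∞) :
    Set (StrongDual ℝ Y) :=
  { f | ∃ (c : ℕ → ℝ) (u : ℕ → StrongDual ℝ X),
      (∀ j, ‖u j‖ ≤ 1) ∧ (∀ j : ℕ, ω ≤ (j : ℕ∞) → c j = 0) ∧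
      Summable (fun j => |c j|) ∧ HasSum (fun j => c j • T (u j)) f }

section

variable {X Y : Type*} [NormedAddCommGroup X] [NormedSpace ℝ X]
  [NormedAddCommGroup Y] [NormedSpace ℝ Y]

variable (X) in
def WeakStarSeqCompactBall : Prop :=
  ∀ u : ℕ → StrongDual ℝ X, (∀ k, ‖u k‖ ≤ 1) →
    ∃ (u₀ : StrongDual ℝ X) (φ : ℕ → ℕ), StrictMono φ ∧ WeakStarTendsto (u ∘ φ) u₀

def WeakStarSeqContinuous (T : StrongDual ℝ X → StrongDual ℝ Y) : Prop :=
  ∀ (u : ℕ → StrongDual ℝ X) (u₀ : StrongDual ℝ X),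
    WeakStarTendsto u u₀ → ∀ y : Y, Tendsto (fun k => T (u k) y) atTop (𝓝 (T u₀ y))

/-- The closed `R`-ball of the gauge `f ↦ inf ∑ |c_j|` over the decompositions of `f` in `Λ_ω`. -/
def atomicBall (T : StrongDual ℝ X → StrongDual ℝ Y) (ω : ℕ∞) (R : ℝ) :
    Set (StrongDual ℝ Y) :=
  { f | ∃ (c : ℕ → ℝ) (u : ℕ → StrongDual ℝ X),
      (∀ j, ‖u j‖ ≤ 1) ∧ (∀ j : ℕ, ω ≤ (j : ℕ∞) → c j = 0) ∧
      Summable (fun j => |c j|) ∧ HasSum (fun j => c j • T (u j)) f ∧ ∑' j, |c j| ≤ R }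

theorem nonempty_interior_closure_of_not_isMeagre {Z : Type*} [TopologicalSpace Z] {s : Set Z}
    (h : ¬ IsMeagre s) : (interior (closure s)).Nonempty :=
  Set.nonempty_iff_ne_empty.2 fun he => h (IsNowhereDense.isMeagre he)

theorem exists_strictMono_forall_of_finite {α ι : Type*} [Finite ι] {S : Set α}
    (P : (ℕ → α) → Prop) (hP : ∀ x φ, StrictMono φ → P x → P (x ∘ φ))
    (hS : ∀ x : ℕ → α, (∀ k, x k ∈ S) → ∃ φ, StrictMono φ ∧ P (x ∘ φ))
    (x : ℕ → ι → α) (hx : ∀ k i, x k i ∈ S) :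
    ∃ φ : ℕ → ℕ, StrictMono φ ∧ ∀ i, P (fun k => x (φ k) i) := by
  classical
  have := Fintype.ofFinite ι
  suffices ∀ s : Finset ι, ∃ φ : ℕ → ℕ, StrictMono φ ∧ ∀ i ∈ s, P (fun k => x (φ k) i) by
    simpa using this Finset.univ
  intro s
  induction s using Finset.induction_on with
  | empty => exact ⟨id, strictMono_id, by simp⟩
  | insert i s _ ih =>
    obtain ⟨φ, hφ, hs⟩ := ih
    obtain ⟨ψ, hψ, hi⟩ := hS (fun k => x (φ k) i) fun k => hx _ _
    refine ⟨φ ∘ ψ, hφ.comp hψ, ?_⟩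
    simp only [Finset.mem_insert, forall_eq_or_imp]
    exact ⟨hi, fun j hj => hP _ ψ hψ (hs j hj)⟩

theorem norm_le_of_weakStarTendsto {v : ℕ → StrongDual ℝ X} {u : StrongDual ℝ X} {C : ℝ}
    (hv : ∀ k, ‖v k‖ ≤ C) (h : WeakStarTendsto v u) : ‖u‖ ≤ C := by
  refine ContinuousLinearMap.opNorm_le_bound _ ((norm_nonneg _).trans (hv 0)) fun x => ?_
  exact le_of_tendsto (h x).norm (Eventually.of_forall fun k => (v k).le_of_opNorm_le (hv k) x)

variable {T : StrongDual ℝ X → StrongDual ℝ Y} {ω : ℕ∞} {M R S r : ℝ} {f g : StrongDual ℝ Y}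

theorem atomicBall_mono : Monotone (atomicBall T ω) := by
  rintro R R' hR f ⟨c, u, hu, hω, hc, hf, hcR⟩
  exact ⟨c, u, hu, hω, hc, hf, hcR.trans hR⟩

theorem atomicBall_subset_Lambda (R : ℝ) : atomicBall T ω R ⊆ Lambda T ω :=
  fun _ ⟨c, u, hu, hω, hc, hf, _⟩ => ⟨c, u, hu, hω, hc, hf⟩

theorem Lambda_eq_iUnion_atomicBall : Lambda T ω = ⋃ n : ℕ, atomicBall T ω (n + 1) := by
  refine Set.Subset.antisymm ?_ (Set.iUnion_subset fun n => atomicBall_subset_Lambda _)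
  rintro f ⟨c, u, hu, hω, hc, hf⟩
  refine Set.mem_iUnion.2 ⟨⌈∑' j, |c j|⌉₊, c, u, hu, hω, hc, hf, ?_⟩
  exact (Nat.le_ceil _).trans (le_add_of_nonneg_right zero_le_one)

theorem exists_not_isMeagre_atomicBall (h : ¬ IsMeagre (Lambda T ω)) :
    ∃ n : ℕ, ¬ IsMeagre (atomicBall T ω (n + 1)) := by
  by_contra! hn
  rw [Lambda_eq_iUnion_atomicBall] at h
  exact h (isMeagre_iUnion hn)

theorem zero_mem_atomicBall : (0 : StrongDual ℝ Y) ∈ atomicBall T ω 0 :=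
  ⟨0, 0, by simp, by simp, by simp [summable_zero], by simp [hasSum_zero], by simp⟩

theorem smul_mem_atomicBall (a : ℝ) (hf : f ∈ atomicBall T ω R) :
    a • f ∈ atomicBall T ω (|a| * R) := by
  obtain ⟨c, u, hu, hω, hc, hf, hcR⟩ := hf
  refine ⟨fun j => a * c j, u, hu, fun j hj => by simp [hω j hj], ?_, ?_, ?_⟩
  · simpa [abs_mul] using hc.mul_left |a|
  · simpa [smul_smul] using hf.const_smul a
  · simp_rw [abs_mul, tsum_mul_left]
    exact mul_le_mul_of_nonneg_left hcR (abs_nonneg a)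

theorem map_mem_atomicBall (σX : StrongDual ℝ X ≃ₗᵢ[ℝ] StrongDual ℝ X)
    (σY : StrongDual ℝ Y ≃ₗᵢ[ℝ] StrongDual ℝ Y) (hσ : ∀ u, T (σX u) = σY (T u))
    (hf : f ∈ atomicBall T ω R) : σY f ∈ atomicBall T ω R := by
  obtain ⟨c, u, hu, hω, hc, hf, hcR⟩ := hf
  refine ⟨c, fun j => σX (u j), fun j => by simpa using hu j, hω, hc, ?_, hcR⟩
  simpa [hσ] using σY.toContinuousLinearEquiv.toContinuousLinearMap.hasSum hf

theorem mem_atomicBall_of_injective {ι : Type*} {e : ι → ℕ} (he : e.Injective)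
    (heω : ∀ i, (e i : ℕ∞) < ω) {c : ι → ℝ} {u : ι → StrongDual ℝ X} (hu : ∀ i, ‖u i‖ ≤ 1)
    (hc : Summable fun i => |c i|) (hf : HasSum (fun i => c i • T (u i)) f) :
    f ∈ atomicBall T ω (∑' i, |c i|) := by
  set c' : ℕ → ℝ := Function.extend e c 0
  set u' : ℕ → StrongDual ℝ X := Function.extend e u 0
  have hc'e : ∀ i, c' (e i) = c i := he.extend_apply c 0
  have hc'0 : ∀ j ∉ Set.range e, c' j = 0 := fun j hj => by
    simp [c', Function.extend_apply' _ _ _ (by simpa using hj)]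
  refine ⟨c', u', fun j => ?_, fun j hj => hc'0 j ?_, ?_, ?_, ?_⟩
  · by_cases hj : ∃ i, e i = j
    · obtain ⟨i, rfl⟩ := hj
      simpa [u', he.extend_apply] using hu i
    · simp [u', Function.extend_apply' _ _ _ hj]
  · rintro ⟨i, rfl⟩
    exact (heω i).not_ge hj
  · exact (he.summable_iff fun j hj => by simp [hc'0 j hj]).1 (by simpa [Function.comp_def, hc'e])
  · exact (he.hasSum_iff fun j hj => by simp [hc'0 j hj]).1
      (by simpa [Function.comp_def, hc'e, u', he.extend_apply])
  · rw [← he.tsum_eq fun j hj => by_contra fun hj' => hj (by simp [hc'0 j hj'])]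
    simp [hc'e]

theorem exists_forall_mem_atomicBall_of_ball_subset (hr : 0 < r) (hR : 0 < R)
    (h : Metric.ball 0 r ⊆ atomicBall T ω R) :
    ∃ C > 0, ∀ f, f ∈ atomicBall T ω (C * ‖f‖) := by
  refine ⟨2 * R / r, by positivity, fun f => ?_⟩
  rcases eq_or_ne f 0 with rfl | hf
  · simpa using zero_mem_atomicBall
  have ht : 0 < 2 * ‖f‖ / r := by positivity
  have hmem : (2 * ‖f‖ / r)⁻¹ • f ∈ atomicBall T ω R := h <| by
    rw [mem_ball_zero_iff, norm_smul, norm_inv, Real.norm_of_nonneg ht.le]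
    field_simp
    linarith [norm_pos_iff.2 hf]
  have := smul_mem_atomicBall (2 * ‖f‖ / r) hmem
  rw [smul_inv_smul₀ ht.ne', abs_of_pos ht] at this
  convert this using 2
  ring

theorem mem_atomicBall_natCast_iff {m : ℕ} :
    f ∈ atomicBall T m R ↔ ∃ (c : Fin m → ℝ) (u : Fin m → StrongDual ℝ X),
      (∀ j, ‖u j‖ ≤ 1) ∧ ∑ j, |c j| ≤ R ∧ ∑ j, c j • T (u j) = f := by
  constructor
  · rintro ⟨c, u, hu, hm, -, hf, hcR⟩
    have hc0 : ∀ j ∉ Finset.range m, c j = 0 := fun j hj =>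
      hm j (by exact_mod_cast (by simpa using hj : m ≤ j))
    refine ⟨fun j => c j, fun j => u j, fun j => hu j, ?_, ?_⟩
    · have hsum : ∑' j, |c j| = ∑ j ∈ Finset.range m, |c j| :=
        tsum_eq_sum (by simp +contextual [hc0])
      rwa [Fin.sum_univ_eq_sum_range (fun j => |c j|), ← hsum]
    · rw [Fin.sum_univ_eq_sum_range (fun j => c j • T (u j))]
      exact (hf.unique (hasSum_sum_of_ne_finset_zero (by simp +contextual [hc0]))).symm
  · rintro ⟨c, u, hu, hcR, rfl⟩
    refine atomicBall_mono ?_ (mem_atomicBall_of_injective Fin.val_injective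
      (fun j => by exact_mod_cast j.isLt) hu (.of_finite) (hasSum_fintype _))
    rwa [tsum_fintype]

theorem mem_atomicBall_natCast_of_weakStarTendsto (hball : WeakStarSeqCompactBall X)
    (hT : WeakStarSeqContinuous T) {m : ℕ} {g : ℕ → StrongDual ℝ Y}
    (hg : ∀ k, g k ∈ atomicBall T m R) (hgf : WeakStarTendsto g f) : f ∈ atomicBall T m R := by
  simp only [mem_atomicBall_natCast_iff] at hg ⊢
  choose c u hu hcR hgc using hg
  have hc_mem : ∀ k j, c k j ∈ Set.Icc (-R) R := fun k j =>
    abs_le.1 ((Finset.single_le_sum (fun i _ => abs_nonneg (c k i)) (Finset.mem_univ j)).trans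
      (hcR k))
  obtain ⟨φ, hφ, hcφ⟩ := exists_strictMono_forall_of_finite
    (fun z => ∃ a, Tendsto z atTop (𝓝 a)) (fun z φ hφ ⟨a, ha⟩ => ⟨a, ha.comp hφ.tendsto_atTop⟩)
    (fun z hz => by
      obtain ⟨a, -, φ, hφ, ha⟩ := tendsto_subseq_of_bounded (Metric.isBounded_Icc (-R) R) hz
      exact ⟨φ, hφ, a, ha⟩) c hc_mem
  obtain ⟨ψ, hψ, huψ⟩ := exists_strictMono_forall_of_finite (S := Metric.closedBall 0 1)
    (fun z => ∃ v, ‖v‖ ≤ 1 ∧ WeakStarTendsto z v)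
    (fun z φ hφ ⟨v, hv, hzv⟩ => ⟨v, hv, fun x => (hzv x).comp hφ.tendsto_atTop⟩)
    (fun z hz => by
      obtain ⟨v, φ, hφ, hzv⟩ := hball z (by simpa using hz)
      exact ⟨φ, hφ, v, norm_le_of_weakStarTendsto (fun k => by simpa using hz (φ k)) hzv, hzv⟩)
    (fun k => u (φ k)) (by simpa using fun k => hu (φ k))
  choose c₀ hc₀ using hcφ
  choose u₀ hu₀ hu₀' using huψ
  refine ⟨c₀, u₀, hu₀, ?_, ?_⟩
  · exact le_of_tendsto (tendsto_finsetSum _ fun j _ => ((hc₀ j).comp hψ.tendsto_atTop).abs)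
      (Eventually.of_forall fun k => hcR (φ (ψ k)))
  · ext y
    refine tendsto_nhds_unique ?_ ((hgf y).comp (hφ.comp hψ).tendsto_atTop)
    simp only [Function.comp_def, ← hgc, sum_apply, smul_apply, smul_eq_mul]
    exact tendsto_finsetSum _ fun j _ =>
      ((hc₀ j).comp hψ.tendsto_atTop).mul (hT _ _ (hu₀' j) y)

theorem exists_ball_subset_atomicBall_natCast (hball : WeakStarSeqCompactBall X)
    (hT : WeakStarSeqContinuous T)
    (hσ : ∃ (σX : ℕ → StrongDual ℝ X ≃ₗᵢ[ℝ] StrongDual ℝ X)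
      (σY : ℕ → StrongDual ℝ Y ≃ₗᵢ[ℝ] StrongDual ℝ Y),
      (∀ k u, T (σX k u) = σY k (T u)) ∧ ∀ f : StrongDual ℝ Y, WeakStarTendsto (σY · f) 0)
    {m : ℕ} (h : ¬ IsMeagre (atomicBall T m R)) :
    ∃ r > 0, Metric.ball 0 r ⊆ atomicBall T m R := by
  have hclosed : IsClosed (atomicBall T m R) := IsSeqClosed.isClosed fun g f hg hgf =>
    mem_atomicBall_natCast_of_weakStarTendsto hball hT hg fun y =>
      ((ContinuousLinearMap.apply ℝ ℝ y).continuous.tendsto f).comp hgf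
  obtain ⟨f₀, hf₀⟩ := nonempty_interior_closure_of_not_isMeagre h
  rw [hclosed.closure_eq] at hf₀
  obtain ⟨r, hr, hsub⟩ := Metric.isOpen_iff.1 isOpen_interior f₀ hf₀
  obtain ⟨σX, σY, hσT, hσ0⟩ := hσ
  refine ⟨r, hr, fun f hf => mem_atomicBall_natCast_of_weakStarTendsto hball hT
    (g := fun k => f + σY k f₀) (fun k => ?_) fun y => ?_⟩
  · have hmem : (σY k).symm f + f₀ ∈ atomicBall T m R :=
      interior_subset (hsub (by simpa [dist_eq_norm] using hf))
    simpa using map_mem_atomicBall (σX k) (σY k) (hσT k) hmem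
  · simpa using tendsto_const_nhds.add (hσ0 f₀ y)

theorem exists_forall_norm_le_one_norm_le [CompleteSpace Y] (hball : WeakStarSeqCompactBall X)
    (hT : WeakStarSeqContinuous T) :
    ∃ M, ∀ u : StrongDual ℝ X, ‖u‖ ≤ 1 → ‖T u‖ ≤ M := by
  have hbdd : ∀ y : Y, ∃ C, ∀ u : Metric.closedBall (0 : StrongDual ℝ X) 1, ‖T u y‖ ≤ C := by
    intro y
    by_contra! hunbdd
    choose v hv using fun k : ℕ => hunbdd k
    obtain ⟨u₀, φ, hφ, hvu₀⟩ := hball (fun k => v k) fun k => mem_closedBall_zero_iff.1 (v k).2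
    have hlim := (hT _ _ hvu₀ y).norm
    refine not_tendsto_atTop_of_tendsto_nhds hlim (tendsto_atTop_mono (fun k => ?_)
      tendsto_natCast_atTop_atTop)
    exact (Nat.cast_le.2 (hφ.le_apply)).trans (hv (φ k)).le
  obtain ⟨M, hM⟩ := banach_steinhaus hbdd
  exact ⟨M, fun u hu => hM ⟨u, by simpa using hu⟩⟩

theorem mem_atomicBall_top_of_hasSum {ι : Type*} [Countable ι]
    (hM : ∀ u : StrongDual ℝ X, ‖u‖ ≤ 1 → ‖T u‖ ≤ M) {G : ι → StrongDual ℝ Y} {R : ι → ℝ}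
    (hG : ∀ i, G i ∈ atomicBall T ⊤ (R i)) (hR : Summable R) (hGf : HasSum G f) :
    f ∈ atomicBall T ⊤ (∑' i, R i) := by
  choose c u hu _ hc hGc hcR using hG
  have hrows : Summable fun i => ∑' j, |c i j| :=
    hR.of_nonneg_of_le (fun i => tsum_nonneg fun j => abs_nonneg _) hcR
  have hc2 : Summable fun p : ι × ℕ => |c p.1 p.2| :=
    (summable_prod_of_nonneg fun _ => abs_nonneg _).2 ⟨hc, hrows⟩
  have hF : Summable fun p : ι × ℕ => c p.1 p.2 • T (u p.1 p.2) :=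
    (hc2.mul_left M).of_norm_bounded fun p => by
      rw [norm_smul, Real.norm_eq_abs, mul_comm]
      exact mul_le_mul_of_nonneg_right (hM _ (hu _ _)) (abs_nonneg _)
  have hFf : HasSum (fun p : ι × ℕ => c p.1 p.2 • T (u p.1 p.2)) f := by
    simpa [hGf.unique (hF.hasSum.prod_fiberwise hGc)] using hF.hasSum
  obtain ⟨e, he⟩ := Countable.exists_injective_nat (ι × ℕ)
  refine atomicBall_mono ?_ (mem_atomicBall_of_injective he (fun _ => ENat.natCast_lt_top _)
    (fun p => hu p.1 p.2) hc2 hFf)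
  rw [hc2.tsum_prod' hc]
  exact hrows.tsum_le_tsum hcR hR

theorem add_mem_atomicBall_top (hM : ∀ u : StrongDual ℝ X, ‖u‖ ≤ 1 → ‖T u‖ ≤ M)
    (hf : f ∈ atomicBall T ⊤ R) (hg : g ∈ atomicBall T ⊤ S) : f + g ∈ atomicBall T ⊤ (R + S) := by
  simpa using mem_atomicBall_top_of_hasSum hM (G := ![f, g]) (R := ![R, S])
    (Fin.forall_fin_two.2 ⟨hf, hg⟩) (.of_finite) (by simpa using hasSum_fintype ![f, g])

theorem exists_mem_atomicBall_norm_sub_lt (hr : 0 < r)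
    (h : Metric.ball 0 r ⊆ closure (atomicBall T ω R)) (k : ℕ) (v : StrongDual ℝ Y)
    (hv : ‖v‖ < r / 2 ^ k) : ∃ g ∈ atomicBall T ω (R / 2 ^ k), ‖v - g‖ < r / 2 ^ (k + 1) := by
  set t : ℝ := 2 ^ k
  have ht : 0 < t := by positivity
  have hv' : t • v ∈ Metric.ball 0 r := by
    rw [mem_ball_zero_iff, norm_smul, Real.norm_of_nonneg ht.le]
    rwa [lt_div_iff₀' ht] at hv
  obtain ⟨b, hb, hvb⟩ := Metric.mem_closure_iff.1 (h hv') (r / 2) (half_pos hr)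
  refine ⟨t⁻¹ • b, ?_, ?_⟩
  · simpa [abs_of_pos ht, div_eq_inv_mul] using smul_mem_atomicBall t⁻¹ hb
  · have hsub : v - t⁻¹ • b = t⁻¹ • (t • v - b) := by
      rw [smul_sub, inv_smul_smul₀ ht.ne']
    rw [hsub, norm_smul, norm_inv, Real.norm_of_nonneg ht.le, ← dist_eq_norm, pow_succ]
    calc t⁻¹ * dist (t • v) b < t⁻¹ * (r / 2) := by gcongr
      _ = r / (t * 2) := by field_simp

theorem ball_subset_atomicBall_top_of_subset_closure
    (hM : ∀ u : StrongDual ℝ X, ‖u‖ ≤ 1 → ‖T u‖ ≤ M) (hr : 0 < r)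
    (h : Metric.ball 0 r ⊆ closure (atomicBall T ⊤ R)) :
    Metric.ball 0 r ⊆ atomicBall T ⊤ (2 * R) := by
  intro f hf
  choose! g hgR hg using exists_mem_atomicBall_norm_sub_lt hr h
  let ρ : ℕ → StrongDual ℝ Y := fun k => Nat.rec f (fun k ρk => ρk - g k ρk) k
  have hρ_succ : ∀ k, ρ (k + 1) = ρ k - g k (ρ k) := fun k => rfl
  have hρ : ∀ k, ‖ρ k‖ < r / 2 ^ k := by
    intro k
    induction k with
    | zero => simpa [ρ] using hf
    | succ k ih => simpa [hρ_succ] using hg k (ρ k) ih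
  have hρ_summable : Summable fun k => ‖ρ k‖ :=
    (summable_geometric_two' (2 * r)).of_nonneg_of_le (fun _ => norm_nonneg _)
      fun k => by simpa [mul_div_cancel_left₀] using (hρ k).le
  have hG : ∀ k, ρ k - ρ (k + 1) ∈ atomicBall T ⊤ (R / 2 ^ k) := fun k => by
    simpa [hρ_succ] using hgR k (ρ k) (hρ k)
  have hGf : HasSum (fun k => ρ k - ρ (k + 1)) f := by
    refine (hasSum_iff_tendsto_nat_of_summable_norm ?_).2 ?_
    · exact (hρ_summable.add ((summable_nat_add_iff 1).2 hρ_summable)).of_nonneg_of_le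
        (fun _ => norm_nonneg _) fun k => norm_sub_le _ _
    · simp_rw [Finset.sum_range_sub']
      simpa [ρ] using tendsto_const_nhds.sub
        (tendsto_zero_iff_norm_tendsto_zero.2 hρ_summable.tendsto_atTop_zero)
  have hgeom : ∑' k : ℕ, R / 2 ^ k = 2 * R := by
    simpa [mul_div_cancel_left₀] using tsum_geometric_two' (2 * R)
  rw [← hgeom]
  exact mem_atomicBall_top_of_hasSum hM hG
    (by simpa [mul_div_cancel_left₀] using summable_geometric_two' (2 * R)) hGf

theorem exists_ball_subset_atomicBall_top (hM : ∀ u : StrongDual ℝ X, ‖u‖ ≤ 1 → ‖T u‖ ≤ M)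
    (h : ¬ IsMeagre (atomicBall T ⊤ R)) : ∃ r > 0, Metric.ball 0 r ⊆ atomicBall T ⊤ (2 * R) := by
  obtain ⟨f₀, hf₀⟩ := nonempty_interior_closure_of_not_isMeagre h
  obtain ⟨r, hr, hsub⟩ := Metric.isOpen_iff.1 isOpen_interior f₀ hf₀
  refine ⟨r, hr, ball_subset_atomicBall_top_of_subset_closure hM hr fun f hf => ?_⟩
  have hplus : f₀ + f ∈ closure (atomicBall T ⊤ R) :=
    interior_subset (hsub (by simpa [dist_eq_norm] using hf))
  have hminus : f₀ - f ∈ closure (atomicBall T ⊤ R) :=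
    interior_subset (hsub (by simpa [dist_eq_norm] using hf))
  have hmid := map_mem_closure₂ (f := fun a b : StrongDual ℝ Y => (2⁻¹ : ℝ) • a + (-2⁻¹ : ℝ) • b)
    (u := atomicBall T ⊤ R) (by fun_prop) hplus hminus fun a ha b hb => by
      convert add_mem_atomicBall_top hM (smul_mem_atomicBall 2⁻¹ ha)
        (smul_mem_atomicBall (-2⁻¹) hb) using 2
      norm_num
      ring
  have hf_eq : (2⁻¹ : ℝ) • (f₀ + f) + (-2⁻¹ : ℝ) • (f₀ - f) = f := by module
  rwa [hf_eq] at hmid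

end

theorem atomic_decomposition_trichotomy_general
    (X Y : Type*) [NormedAddCommGroup X] [NormedSpace ℝ X]
    [NormedAddCommGroup Y] [NormedSpace ℝ Y] [CompleteSpace Y]
    (hball : ∀ u : ℕ → StrongDual ℝ X, (∀ k, ‖u k‖ ≤ 1) →
      ∃ (u₀ : StrongDual ℝ X) (φ : ℕ → ℕ), StrictMono φ ∧
        WeakStarTendsto (u ∘ φ) u₀)
    (T : StrongDual ℝ X → StrongDual ℝ Y)
    (hA1 : ∀ (u : ℕ → StrongDual ℝ X) (u₀ : StrongDual ℝ X),
      WeakStarTendsto u u₀ →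
      ∀ y : Y, Tendsto (fun k => T (u k) y) atTop (𝓝 (T u₀ y)))
    (hA3 : ∃ (σX : ℕ → StrongDual ℝ X ≃ₗᵢ[ℝ] StrongDual ℝ X)
             (σY : ℕ → StrongDual ℝ Y ≃ₗᵢ[ℝ] StrongDual ℝ Y),
      (∀ k u, T (σX k u) = σY k (T u)) ∧
      (∀ f : StrongDual ℝ Y, ∀ y : Y,
        Tendsto (fun k => σY k f y) atTop (𝓝 0)))
    (hnonmeagre : ¬ IsMeagre (Lambda T ⊤)) :
    ∃ ω : ℕ∞,
      Lambda T ω = Set.univ ∧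
      IsMeagre (⋃ m ∈ {m : ℕ | (m : ℕ∞) < ω}, Lambda T (m : ℕ∞)) ∧
      ∃ C : ℝ, 0 < C ∧ ∀ f : StrongDual ℝ Y,
        ∃ (c : ℕ → ℝ) (u : ℕ → StrongDual ℝ X),
          (∀ j, ‖u j‖ ≤ 1) ∧ (∀ j : ℕ, ω ≤ (j : ℕ∞) → c j = 0) ∧
          Summable (fun j => |c j|) ∧ HasSum (fun j => c j • T (u j)) f ∧
          ∑' j, |c j| ≤ C * ‖f‖ := by
  classical
  suffices ∃ ω : ℕ∞, (∀ m : ℕ, (m : ℕ∞) < ω → IsMeagre (Lambda T m)) ∧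
      ∃ C > 0, ∀ f, f ∈ atomicBall T ω (C * ‖f‖) by
    obtain ⟨ω, hmeagre, C, hC, hrep⟩ := this
    exact ⟨ω, Set.eq_univ_of_forall fun f => atomicBall_subset_Lambda _ (hrep f),
      isMeagre_biUnion (Set.to_countable _) hmeagre, C, hC, hrep⟩
  by_cases hfin : ∃ m : ℕ, ¬ IsMeagre (Lambda T m)
  · obtain ⟨n, hn⟩ := exists_not_isMeagre_atomicBall (Nat.find_spec hfin)
    obtain ⟨r, hr, hsub⟩ := exists_ball_subset_atomicBall_natCast hball hA1 hA3 hn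
    exact ⟨Nat.find hfin, fun m hm => not_not.1 (Nat.find_min hfin (by exact_mod_cast hm)),
      exists_forall_mem_atomicBall_of_ball_subset hr (by positivity) hsub⟩
  · push Not at hfin
    obtain ⟨M, hM⟩ := exists_forall_norm_le_one_norm_le hball hA1
    obtain ⟨n, hn⟩ := exists_not_isMeagre_atomicBall hnonmeagre
    obtain ⟨r, hr, hsub⟩ := exists_ball_subset_atomicBall_top hM hn
    exact ⟨⊤, fun m _ => hfin m,
      exists_forall_mem_atomicBall_of_ball_subset hr (by positivity) hsub⟩

/-- **Proposition 2.5** (trichotomy for atomic decompositions in terms of `T`). -/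
theorem atomic_decomposition_trichotomy
    (X Y : Type*) [NormedAddCommGroup X] [NormedSpace ℝ X] [CompleteSpace X]
    [NormedAddCommGroup Y] [NormedSpace ℝ Y] [CompleteSpace Y]
    (hball : ∀ u : ℕ → StrongDual ℝ X, (∀ k, ‖u k‖ ≤ 1) →
      ∃ (u₀ : StrongDual ℝ X) (φ : ℕ → ℕ), StrictMono φ ∧
        WeakStarTendsto (u ∘ φ) u₀)
    (s : ℝ) (hs : 0 < s)
    (T : StrongDual ℝ X → StrongDual ℝ Y)
    (hA1 : ∀ (u : ℕ → StrongDual ℝ X) (u₀ : StrongDual ℝ X),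
      WeakStarTendsto u u₀ →
      ∀ y : Y, Tendsto (fun k => T (u k) y) atTop (𝓝 (T u₀ y)))
    (hA2 : ∀ a : ℝ, 0 < a → ∀ u, T (a • u) = a ^ s • T u)
    (hA3 : ∃ (σX : ℕ → StrongDual ℝ X ≃ₗᵢ[ℝ] StrongDual ℝ X)
             (σY : ℕ → StrongDual ℝ Y ≃ₗᵢ[ℝ] StrongDual ℝ Y),
      (∀ k u, T (σX k u) = σY k (T u)) ∧
      (∀ f : StrongDual ℝ Y, ∀ y : Y,
        Tendsto (fun k => σY k f y) atTop (𝓝 0)))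
    (hnonmeagre : ¬ IsMeagre (Lambda T ⊤)) :
    ∃ ω : ℕ∞,
      Lambda T ω = Set.univ ∧
      IsMeagre (⋃ m ∈ {m : ℕ | (m : ℕ∞) < ω}, Lambda T (m : ℕ∞)) ∧
      ∃ C : ℝ, 0 < C ∧ ∀ f : StrongDual ℝ Y,
        ∃ (c : ℕ → ℝ) (u : ℕ → StrongDual ℝ X),
          (∀ j, ‖u j‖ ≤ 1) ∧ (∀ j : ℕ, ω ≤ (j : ℕ∞) → c j = 0) ∧
          Summable (fun j => |c j|) ∧ HasSum (fun j => c j • T (u j)) f ∧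
          ∑' j, |c j| ≤ C * ‖f‖ :=
  atomic_decomposition_trichotomy_general X Y hball T hA1 hA3 hnonmeagre
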